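/- If u_0, ..., u_n satisfy u_0 = 1/2, u_n = 0 and (n+1)·u_k = k·u_{k-1} + (n-k-1)·u_{k+1} for 1 ≤ k ≤ n-1, then u_{n-1} = 1/(2^{n+1} − 2). -/

import Mathlib

/-!
Multiplying the recurrence by `C(n-1, k)` turns it, via `(k+1) C(m, k+1) = (m-k) C(m, k)`, into the
recurrence `(n+1) v_k = (n-k) v_{k-1} + (k+1) v_{k+1}` for `v_k = C(n-1, k) u_k`, which the binomial
tails `T_k = ∑_{j > k} C(n, j)` also satisfy. Since `v_n = 0 = T_n` and `T_{n-1} = 1`, running the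
recurrence downwards gives `v = u_{n-1} T`, and at `k = 0` this reads `1/2 = u_{n-1} (2^n - 1)`.
-/

open Finset

def BinomialRec (n : ℕ) (v : ℕ → ℝ) : Prop :=
  ∀ k, k + 2 ≤ n →
    ((n : ℝ) + 1) * v (k + 1) = ((n : ℝ) - k - 1) * v k + ((k : ℝ) + 2) * v (k + 2)

def chooseTail (n k : ℕ) : ℝ := ∑ j ∈ Ico (k + 1) (n + 1), (n.choose j : ℝ)

lemma cast_choose_succ_mul {n k : ℕ} (hk : k ≤ n) :
    (n.choose (k + 1) : ℝ) * ((k : ℝ) + 1) = n.choose k * ((n : ℝ) - k) := by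
  rw [← Nat.cast_sub hk]
  exact_mod_cast Nat.choose_succ_right_eq n k

lemma chooseTail_eq_choose_add {n k : ℕ} (hk : k < n) :
    chooseTail n k = n.choose (k + 1) + chooseTail n (k + 1) :=
  sum_eq_sum_Ico_succ_bot (by omega) _

lemma chooseTail_self (n : ℕ) : chooseTail n n = 0 := by
  simp [chooseTail]

lemma chooseTail_pred {n : ℕ} (hn : 0 < n) : chooseTail n (n - 1) = 1 := by
  rw [chooseTail_eq_choose_add (by omega), Nat.sub_add_cancel hn, chooseTail_self,
    Nat.choose_self]
  norm_num

lemma chooseTail_zero (n : ℕ) : chooseTail n 0 = 2 ^ n - 1 := by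
  have hsum : ∑ j ∈ range (n + 1), (n.choose j : ℝ) = 2 ^ n := by
    exact_mod_cast Nat.sum_range_choose n
  rw [range_eq_Ico, sum_eq_sum_Ico_succ_bot (Nat.succ_pos n)] at hsum
  simp only [Nat.choose_zero_right, Nat.cast_one] at hsum
  rw [chooseTail]
  linarith

lemma binomialRec_chooseTail (n : ℕ) : BinomialRec n (chooseTail n) := by
  intro k hk
  have h₀ := chooseTail_eq_choose_add (n := n) (k := k) (by omega)
  have h₁ := chooseTail_eq_choose_add (n := n) (k := k + 1) (by omega)
  have hc := cast_choose_succ_mul (n := n) (k := k + 1) (by omega)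
  push_cast at hc
  rw [h₀, h₁]
  linear_combination hc

lemma BinomialRec.const_mul {n : ℕ} {v : ℕ → ℝ} (hv : BinomialRec n v) (c : ℝ) :
    BinomialRec n (fun k => c * v k) := by
  intro k hk
  linear_combination c * hv k hk

lemma binomialRec_choose_mul {n : ℕ} {u : ℕ → ℝ}
    (hrec : ∀ k, 1 ≤ k → k ≤ n - 1 →
      ((n : ℝ) + 1) * u k = (k : ℝ) * u (k - 1) + ((n : ℝ) - k - 1) * u (k + 1)) :
    BinomialRec n (fun k => ((n - 1).choose k : ℝ) * u k) := by
  intro k hk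
  have hr := hrec (k + 1) (by omega) (by omega)
  have c₀ := cast_choose_succ_mul (n := n - 1) (k := k) (by omega)
  have c₁ := cast_choose_succ_mul (n := n - 1) (k := k + 1) (by omega)
  rw [Nat.add_sub_cancel] at hr
  rw [Nat.cast_sub (by omega : 1 ≤ n)] at c₀ c₁
  push_cast at hr c₀ c₁ ⊢
  linear_combination ((n - 1).choose (k + 1) : ℝ) * hr + u k * c₀ - u (k + 2) * c₁

lemma BinomialRec.eq_of_eq_at_top {n : ℕ} {v w : ℕ → ℝ} (hn : 0 < n)
    (hv : BinomialRec n v) (hw : BinomialRec n w) (hpred : v (n - 1) = w (n - 1))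
    (htop : v n = w n) {k : ℕ} (hk : k < n) : v k = w k := by
  suffices v k = w k ∧ v (k + 1) = w (k + 1) from this.1
  replace hk : k ≤ n - 1 := by omega
  induction hk using Nat.decreasingInduction with
  | self => exact ⟨hpred, Nat.sub_add_cancel hn ▸ htop⟩
  | of_succ j hj ih =>
    refine ⟨?_, ih.1⟩
    have hcoef : (n : ℝ) - j - 1 ≠ 0 := by
      have : (j : ℝ) + 2 ≤ n := by exact_mod_cast (by omega : j + 2 ≤ n)
      linarith
    have hvj := hv j (by omega)
    have hwj := hw j (by omega)
    rw [ih.1, ih.2] at hvj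
    exact mul_left_cancel₀ hcoef (by linarith)

theorem stmt16_general (n : ℕ) (hn : 2 ≤ n) (u : ℕ → ℝ)
    (h0 : u 0 = 1/2)
    (hrec : ∀ k, 1 ≤ k → k ≤ n - 1 →
      ((n : ℝ) + 1) * u k = (k : ℝ) * u (k - 1) + ((n : ℝ) - k - 1) * u (k + 1)) :
    u (n - 1) = 1 / (2 ^ (n + 1) - 2) := by
  have hv := binomialRec_choose_mul hrec
  have hT := (binomialRec_chooseTail n).const_mul (u (n - 1))
  have key := hv.eq_of_eq_at_top (by omega) hT
    (by simp [chooseTail_pred (by omega : 0 < n)])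
    (by simp [chooseTail_self, Nat.choose_eq_zero_of_lt (by omega : n - 1 < n)])
    (by omega : 0 < n)
  simp only [Nat.choose_zero_right, Nat.cast_one, one_mul, chooseTail_zero, h0] at key
  have hpow : (2 : ℝ) ^ (n + 1) - 2 = 2 * (2 ^ n - 1) := by ring
  have hne : (2 : ℝ) ^ n - 1 ≠ 0 := (sub_pos.2 (one_lt_pow₀ one_lt_two (by omega))).ne'
  rw [hpow, eq_div_iff (mul_ne_zero two_ne_zero hne)]
  linear_combination -2 * key

theorem stmt16 (n : ℕ) (hn : 2 ≤ n) (u : ℕ → ℝ)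
    (h0 : u 0 = 1/2) (hend : u n = 0)
    (hrec : ∀ k, 1 ≤ k → k ≤ n - 1 →
      ((n : ℝ) + 1) * u k = (k : ℝ) * u (k - 1) + ((n : ℝ) - k - 1) * u (k + 1)) :
    u (n - 1) = 1 / (2 ^ (n + 1) - 2) :=
  stmt16_general n hn u h0 hrec
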